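/- arXiv:2506.08733 — 7 statements merged into one kernel-verified Lean document; each statement's English description precedes it below -/
import Mathlib

section
/- Let A ⊆ ℝ be a set such that the inner measure of its complement is positive, i.e. μ_*(ℝ \ A) > 0. Then the family {B ∈ 𝓑(ℝ) | A ⊆ B and μ(ℝ \ B) > 0} of Borel sets containing A whose complement has positive measure has cardinality 𝔠 = 2^ℵ₀. -/
open MeasureTheory Cardinal

/-- The inner measure of `M ⊆ ℝ`: the supremum of the measures of Borel sets contained in `M`.
(The measurable sets of `ℝ` are exactly the Borel sets.) -/
noncomputable def innerMeasure (M : Set ℝ) : ENNReal :=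
  ⨆ (B : Set ℝ) (_ : MeasurableSet B) (_ : B ⊆ M), volume B

/-- If `μ_*(ℝ \ A) > 0`, then the family of Borel sets `B ⊇ A` with `μ(ℝ \ B) > 0`
has cardinality `𝔠 = 2^ℵ₀`. -/
theorem borel_supersets_with_conull_complement_card (A : Set ℝ)
    (hA : 0 < innerMeasure Aᶜ) :
    #{B : Set ℝ // MeasurableSet B ∧ A ⊆ B ∧ 0 < volume Bᶜ} = Cardinal.continuum := by
  apply le_antisymm
  · -- upper bound: at most continuum many Borel sets
    have hc : (⋃ (a : ℚ) (b : ℚ) (_ : a < b), {Set.Ioo (a : ℝ) (b : ℝ)}).Countable :=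
      Set.countable_iUnion fun _ => Set.countable_iUnion fun _ =>
        Set.countable_iUnion fun _ => Set.countable_singleton _
    have h1 : #{t : Set ℝ | @MeasurableSet ℝ
        (MeasurableSpace.generateFrom
          (⋃ (a : ℚ) (b : ℚ) (_ : a < b), {Set.Ioo (a : ℝ) (b : ℝ)})) t} ≤ 𝔠 :=
      MeasurableSpace.cardinal_measurableSet_le_continuum
        (le_trans (Cardinal.mk_le_aleph0_iff.2 hc.to_subtype) aleph0_le_continuum)
    have heq : (MeasurableSpace.generateFrom
          (⋃ (a : ℚ) (b : ℚ) (_ : a < b), {Set.Ioo (a : ℝ) (b : ℝ)})) =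
        (inferInstance : MeasurableSpace ℝ) := by
      rw [← Real.borel_eq_generateFrom_Ioo_rat]
      exact (BorelSpace.measurable_eq (α := ℝ)).symm
    rw [heq] at h1
    refine le_trans ?_ h1
    exact Cardinal.mk_le_mk_of_subset fun B hB => hB.1
  · -- lower bound
    obtain ⟨B₀, hB₀m, hB₀sub, hB₀pos⟩ : ∃ B₀ : Set ℝ, MeasurableSet B₀ ∧ B₀ ⊆ Aᶜ ∧
        0 < volume B₀ := by
      by_contra h
      push_neg at h
      have : innerMeasure Aᶜ ≤ 0 :=
        iSup_le fun B => iSup_le fun hBm => iSup_le fun hBsub => h B hBm hBsub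
      exact absurd this (not_le_of_gt hA)
    obtain ⟨K, hKsub, hKc, hKpos⟩ := hB₀m.exists_lt_isCompact hB₀pos
    have hKunc : ¬ K.Countable := fun h => by
      simp [h.measure_zero volume] at hKpos
    obtain ⟨f, hfr, _, hfi⟩ := hKc.isClosed.exists_nat_bool_injection_of_not_countable hKunc
    -- for each x ∈ K, the set (K \ {x})ᶜ is in the family
    have hmem : ∀ b : ℕ → Bool, MeasurableSet (K \ {f b})ᶜ ∧ A ⊆ (K \ {f b})ᶜ ∧
        0 < volume ((K \ {f b})ᶜ)ᶜ := by
      intro b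
      refine ⟨((hKc.isClosed.measurableSet).diff (measurableSet_singleton _)).compl, ?_, ?_⟩
      · exact fun x hx hxK => absurd hx (hB₀sub (hKsub hxK.1))
      · rw [compl_compl]
        have : volume (K \ {f b}) = volume K := by
          rw [measure_diff_null (measure_singleton _)]
        rw [this]
        exact pos_of_gt hKpos
    have hinj : Function.Injective (fun b : ℕ → Bool =>
        (⟨(K \ {f b})ᶜ, hmem b⟩ : {B : Set ℝ // MeasurableSet B ∧ A ⊆ B ∧ 0 < volume Bᶜ})) := by
      intro b₁ b₂ h
      simp only [Subtype.mk.injEq, compl_inj_iff] at h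
      apply hfi
      by_contra hne
      have h1 : f b₂ ∈ K \ {f b₁} := ⟨hfr ⟨b₂, rfl⟩, fun hs => hne (Set.eq_of_mem_singleton hs).symm⟩
      rw [h] at h1
      exact h1.2 rfl
    calc 𝔠 = #(ℕ → Bool) := by
          rw [Cardinal.mk_arrow, Cardinal.mk_bool, Cardinal.mk_nat, Cardinal.lift_aleph0,
            Cardinal.lift_two, Cardinal.two_power_aleph0]
      _ ≤ _ := Cardinal.mk_le_of_injective hinj
end

section
/- For any subset X ⊆ ℝ, the trace σ-algebra 𝓑(X) = {B ∩ X | B ∈ 𝓑(ℝ)} coincides with the Borel σ-algebra 𝓑(τ_X) generated by the order topology τ_X on X, where X carries the linear order inherited from ℝ. -/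
open MeasureTheory Set

/-- For each real `a`, the set `{x : X | ↑x < a}` is measurable for the Borel σ-algebra of the
order topology on `X`. -/
lemma aux_lt_measurable (X : Set ℝ) (a : ℝ) :
    MeasurableSet[@borel X (Preorder.topology X)] {x : X | (x : ℝ) < a} := by
  letI t : TopologicalSpace X := Preorder.topology X
  by_cases h : ∃ m : X, (m : ℝ) < a ∧ ∀ x : X, (x : ℝ) < a → x ≤ m
  · obtain ⟨m, hm, hmax⟩ := h
    have hS : {x : X | (x : ℝ) < a} = Iic m := by
      ext x
      constructor
      · exact fun hx => hmax x hx
      · intro hx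
        exact lt_of_le_of_lt (Subtype.coe_le_coe.mpr hx) hm
    rw [hS]
    have hopen : IsOpen (Ioi m) :=
      TopologicalSpace.GenerateOpen.basic _ ⟨m, Or.inl rfl⟩
    have : MeasurableSet[@borel X t] (Ioi m) :=
      MeasurableSpace.GenerateMeasurable.basic _ hopen
    simpa [← compl_Ioi] using this.compl
  · push_neg at h
    have hS : {x : X | (x : ℝ) < a} = ⋃ (m : X) (_ : (m : ℝ) < a), {x : X | x < m} := by
      ext x
      simp only [mem_setOf_eq, mem_iUnion]
      constructor
      · intro hx
        obtain ⟨y, hy, hxy⟩ := h x hx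
        exact ⟨y, hy, hxy⟩
      · rintro ⟨m, hm, hxm⟩
        exact lt_trans (Subtype.coe_lt_coe.mpr hxm) hm
    rw [hS]
    have hopen : IsOpen (⋃ (m : X) (_ : (m : ℝ) < a), {x : X | x < m}) := by
      refine isOpen_iUnion fun m => isOpen_iUnion fun _ => ?_
      exact TopologicalSpace.GenerateOpen.basic _ ⟨m, Or.inr rfl⟩
    exact MeasurableSpace.GenerateMeasurable.basic _ hopen

/-- For any subset `X ⊆ ℝ`, the trace σ-algebra on `X` induced by the Borel σ-algebra of `ℝ`
(which is the σ-algebra of measurable sets of the subtype `X`) coincides with the Borel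
σ-algebra generated by the order topology on `X`, where `X` carries the linear order
inherited from `ℝ`. -/
theorem trace_borel_eq_borel_orderTopology (X : Set ℝ) :
    (Subtype.instMeasurableSpace : MeasurableSpace X) =
      @borel X (Preorder.topology X) := by
  apply le_antisymm
  · -- trace ≤ borel (order topology)
    have h1 : (Subtype.instMeasurableSpace : MeasurableSpace X) =
        (MeasurableSpace.generateFrom (range Iio)).comap ((↑) : X → ℝ) := by
      rw [← borel_eq_generateFrom_Iio ℝ, ← BorelSpace.measurable_eq (α := ℝ)]
      rfl
    rw [h1, MeasurableSpace.comap_generateFrom]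
    refine MeasurableSpace.generateFrom_le ?_
    rintro s ⟨u, ⟨a, rfl⟩, rfl⟩
    exact aux_lt_measurable X a
  · -- borel (order topology) ≤ trace
    have h2 : instTopologicalSpaceSubtype ≤ Preorder.topology X :=
      induced_topology_le_preorder fun {x y} => Subtype.coe_lt_coe
    calc @borel X (Preorder.topology X) ≤ @borel X instTopologicalSpaceSubtype := borel_anti h2
      _ = Subtype.instMeasurableSpace := (BorelSpace.measurable_eq (α := X)).symm
end

section
/- Let C, C' ⊆ ℝ be disjoint subsets such that C ⊆ ℝ_{≥0} and C ∪ C' is algebraically independent over ℚ, and let K = ℚ(√C ∪ C') be the subfield of ℝ generated over ℚ by √C ∪ C', where √C = {√c | c ∈ C}. Then no element c' ∈ C' is a square in K, i.e. for every c' ∈ C' and every b ∈ K one has b² ≠ c'. -/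
/-!
Sending `c ↦ c` on `C` and `c' ↦ -c'` on `C'` preserves algebraic independence, so it defines a
field embedding `φ` of `ℚ(C ∪ C')` into `ℝ`. Extend `φ` to `ℚ(C ∪ C')(√C) ⊇ K` with values in `ℂ`:
the image of `√c` squares to `φ c = c ≥ 0`, so it is real, and the extension is a real embedding
`ψ`. If `b ∈ K` had `b ^ 2 = c'`, then `ψ b ^ 2 = -c' < 0`.
-/

open Set IntermediateField

theorem AlgebraicIndependent.units_smul {ι R A : Type*} [CommRing R] [CommRing A] [Algebra R A]
    {x : ι → A} (hx : AlgebraicIndependent R x) (u : ι → Rˣ) :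
    AlgebraicIndependent R (u • x) := by
  rw [algebraicIndependent_iff_injective_aeval] at hx ⊢
  let scale (v : ι → Rˣ) : MvPolynomial ι R →ₐ[R] MvPolynomial ι R :=
    MvPolynomial.aeval fun i => (v i : R) • MvPolynomial.X i
  have hscale : (scale fun i => (u i)⁻¹).comp (scale u) = AlgHom.id R _ := by
    ext i; simp [scale, smul_smul]
  have heq : MvPolynomial.aeval (u • x) = (MvPolynomial.aeval x).comp (scale u) := by
    ext i; simp [scale, Units.smul_def]
  rw [heq]
  exact hx.comp (Function.LeftInverse.injective (g := scale fun i => (u i)⁻¹)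
    (AlgHom.congr_fun hscale))

theorem AlgebraicIndependent.exists_algHom_adjoin {ι F E L : Type*} [Field F] [Field E] [Field L]
    [Algebra F E] [Algebra F L] {x : ι → E} {y : ι → L} (hx : AlgebraicIndependent F x)
    (hy : AlgebraicIndependent F y) :
    ∃ φ : adjoin F (range x) →ₐ[F] L,
      ∀ i, φ ⟨x i, subset_adjoin F _ (mem_range_self i)⟩ = y i := by
  refine ⟨(IsFractionRing.liftAlgHom (algebraicIndependent_iff_injective_aeval.1 hy)).comp
    hx.reprField, fun i => ?_⟩
  have hrepr : hx.reprField ⟨x i, subset_adjoin F _ (mem_range_self i)⟩ =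
      algebraMap (MvPolynomial ι F) _ (MvPolynomial.X i) :=
    hx.aevalEquivField.symm_apply_eq.2 <| Subtype.ext <| by simp
  simp [hrepr]

theorem Complex.im_eq_zero_of_sq_eq_ofReal {z : ℂ} {r : ℝ} (hr : 0 ≤ r) (h : z ^ 2 = r) :
    z.im = 0 := by
  have hsq : z ^ 2 = ((√r : ℝ) : ℂ) ^ 2 := by rw [h, ← ofReal_pow, Real.sq_sqrt hr]
  rcases sq_eq_sq_iff_eq_or_eq_neg.1 hsq with rfl | rfl <;> simp

theorem exists_ringHom_adjoin_extend_of_sq_nonneg {E : Type*} [Field E] [Algebra E ℝ] (φ : E →+* ℝ)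
    {s : Set ℝ} (hs : ∀ a ∈ s, ∃ e : E, algebraMap E ℝ e = a ^ 2 ∧ 0 ≤ φ e) :
    ∃ ψ : adjoin E s →+* ℝ, ∀ e : E, ψ (algebraMap E _ e) = φ e := by
  let : Algebra E ℂ := (Complex.ofRealHom.comp φ).toAlgebra
  have : Algebra.IsAlgebraic E (adjoin E s) := by
    refine isAlgebraic_adjoin fun a ha => ?_
    obtain ⟨e, he, -⟩ := hs a ha
    exact ⟨Polynomial.X ^ 2 - Polynomial.C e, Polynomial.monic_X_pow_sub_C _ two_ne_zero,
      by simp [he]⟩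
  let ψ₀ : adjoin E s →ₐ[E] ℂ := IsAlgClosed.lift
  have hreal : ∀ t, (ψ₀ t).im = 0 := by
    rintro ⟨t, ht⟩
    induction ht using adjoin_induction with
    | mem a ha =>
      obtain ⟨e, he, hφe⟩ := hs a ha
      refine Complex.im_eq_zero_of_sq_eq_ofReal hφe ?_
      rw [← map_pow, show (⟨a, subset_adjoin E s ha⟩ ^ 2 : adjoin E s) = algebraMap E _ e from
        Subtype.ext he.symm, ψ₀.commutes]
      rfl
    | algebraMap e => exact congr_arg Complex.im (ψ₀.commutes e) |>.trans (Complex.ofReal_im _)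
    | add x y hx hy ihx ihy =>
      change (ψ₀ (⟨x, hx⟩ + ⟨y, hy⟩)).im = 0
      rw [map_add, Complex.add_im, ihx, ihy, add_zero]
    | inv x hx ihx =>
      change (ψ₀ (⟨x, hx⟩⁻¹)).im = 0
      rw [map_inv₀, Complex.inv_im, ihx, neg_zero, zero_div]
    | mul x y hx hy ihx ihy =>
      change (ψ₀ (⟨x, hx⟩ * ⟨y, hy⟩)).im = 0
      rw [map_mul, Complex.mul_im, ihx, ihy, mul_zero, zero_mul, add_zero]
  refine ⟨{ toFun := fun t => (ψ₀ t).re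
            map_one' := by simp
            map_mul' := fun t u => by simp [Complex.mul_re, hreal t, hreal u]
            map_zero' := by simp
            map_add' := fun t u => by simp }, fun e => ?_⟩
  simp only [RingHom.coe_mk, MonoidHom.coe_mk, OneHom.coe_mk, ψ₀.commutes]
  rfl

/-- Let `C, C' ⊆ ℝ` be disjoint, with `C ⊆ ℝ≥0` and `C ∪ C'` algebraically independent over `ℚ`,
and let `K = ℚ(√C ∪ C')` be the smallest subfield of `ℝ` containing `ℚ ∪ √C ∪ C'`.
Then no element of `C'` is a square in `K`. -/
theorem no_element_of_C'_is_square (C C' : Set ℝ) (hdisj : Disjoint C C')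
    (hC : C ⊆ {x : ℝ | 0 ≤ x})
    (hind : AlgebraicIndependent ℚ ((↑) : (C ∪ C' : Set ℝ) → ℝ))
    (K : Subfield ℝ)
    (hK : K = Subfield.closure (Set.range ((↑) : ℚ → ℝ) ∪ (Real.sqrt '' C ∪ C'))) :
    ∀ c' ∈ C', ∀ b ∈ K, b ^ 2 ≠ c' := by
  classical
  rintro c' hc' b hb hb2
  let E := adjoin ℚ (range ((↑) : (C ∪ C' : Set ℝ) → ℝ))
  have hE (c : ℝ) (hc : c ∈ C ∪ C') : c ∈ E := subset_adjoin _ _ ⟨⟨c, hc⟩, rfl⟩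
  let sign : (C ∪ C' : Set ℝ) → ℚˣ := fun i => if (i : ℝ) ∈ C' then -1 else 1
  obtain ⟨φ, hφ⟩ := hind.exists_algHom_adjoin (hind.units_smul sign)
  have hφC (c : ℝ) (hc : c ∈ C) : φ ⟨c, hE c (.inl hc)⟩ = c := by
    simp [hφ ⟨c, .inl hc⟩, sign, disjoint_left.1 hdisj hc]
  have hφC' : φ ⟨c', hE c' (.inr hc')⟩ = -c' := by
    simp [hφ ⟨c', .inr hc'⟩, sign, hc']
  obtain ⟨ψ, hψ⟩ := exists_ringHom_adjoin_extend_of_sq_nonneg φ.toRingHom (s := Real.sqrt '' C) <| by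
    rintro _ ⟨c, hc, rfl⟩
    exact ⟨⟨c, hE c (.inl hc)⟩, (Real.sq_sqrt (hC hc)).symm, (hφC c hc).symm ▸ hC hc⟩
  have hKT : K ≤ (adjoin E (Real.sqrt '' C)).toSubfield := by
    rw [hK, Subfield.closure_le]
    rintro x (⟨q, rfl⟩ | ⟨c, hc, rfl⟩ | hx)
    · exact SubfieldClass.ratCast_mem _ q
    · exact subset_adjoin _ _ ⟨c, hc, rfl⟩
    · exact algebraMap_mem _ (⟨x, hE x (.inr hx)⟩ : E)
  have hψb : ψ ⟨b, hKT hb⟩ ^ 2 = -c' := by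
    rw [← map_pow, ← hφC']
    exact congr_arg ψ (Subtype.ext hb2) |>.trans (hψ _)
  have hc'pos : 0 < c' :=
    (hb2 ▸ sq_nonneg b).lt_of_ne (hind.ne_zero (⟨c', .inr hc'⟩ : (C ∪ C' : Set ℝ))).symm
  linarith [hψb ▸ sq_nonneg (ψ ⟨b, hKT hb⟩)]
end

section
/- There exists a subfield K ⊆ ℝ of cardinality 𝔠 such that the set of squares D = {y² | y ∈ K} ⊆ K is not a member of the Borel σ-algebra 𝓑(τ_K) generated by the order topology τ_K on K, where K carries the linear order inherited from ℝ. (D is defined in K by the ring-language formula ∃y x = y² without parameters.) -/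
/-!
Enumerate the Borel sets of `ℝ` as `B i`, `i < 𝔠`, and choose by transfinite recursion reals
`t i` with `t i ∈ B i ∨ t i ^ 2 ∉ B i`, each transcendental over the field generated by the
earlier ones: only `< 𝔠` reals are algebraic over a field of size `< 𝔠`, while `𝔠` reals
satisfy the condition. The `t i` are then algebraically independent, so no `t i` is a square in
`K = ℚ(t i : i < 𝔠)`, since `K = F(t i)` with `t i` transcendental over `F`. As `ℚ ⊆ K` is
dense, the order topology of `K` is the subspace topology, so a Borel set of squares would be
`K ∩ B i` for some `i`, and `t i` refutes this: either `t i ∈ B i` is a square, or the square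
`t i ^ 2` is not in `B i`.
-/

open Cardinal Set Polynomial IntermediateField

universe u

theorem Transcendental.sq_ne_of_mem_adjoin_simple {F E : Type*} [Field F] [Field E] [Algebra F E]
    {x : E} (hx : Transcendental F x) {g : E} (hg : g ∈ F⟮x⟯) : g ^ 2 ≠ x := by
  obtain ⟨p, q, rfl⟩ := (mem_adjoin_simple_iff F _).1 hg
  intro h
  by_cases hq : Polynomial.aeval x q = 0
  · rw [hq, div_zero, zero_pow two_ne_zero] at h
    exact hx (h ▸ isAlgebraic_zero)
  have hq0 : q ≠ 0 := by rintro rfl; simp at hq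
  have hpq : p ^ 2 = X * q ^ 2 := transcendental_iff_injective.mp hx <| by
    rw [div_pow, div_eq_iff (pow_ne_zero 2 hq)] at h
    simpa only [map_mul, map_pow, aeval_X] using h
  -- the two sides of `p ^ 2 = X * q ^ 2` have degrees of different parity
  have := congrArg natDegree hpq
  rw [natDegree_pow, natDegree_mul X_ne_zero (pow_ne_zero 2 hq0), natDegree_X,
    natDegree_pow] at this
  omega

theorem AlgebraicIndependent.sq_ne_of_mem_adjoin_range {ι F E : Type*} [Field F] [Field E]
    [Algebra F E] {x : ι → E} (hx : AlgebraicIndependent F x) (i : ι) {g : E}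
    (hg : g ∈ adjoin F (range x)) : g ^ 2 ≠ x i := by
  have htr : Transcendental (adjoin F (x '' {i}ᶜ)) (x i) :=
    IntermediateField.transcendental_adjoin_iff.mpr <|
      hx.transcendental_adjoin (notMem_compl_iff.mpr rfl)
  have hrange : range x = x '' {i}ᶜ ∪ {x i} := by
    rw [← image_univ, ← compl_union_self {i}, image_union, image_singleton]
  rw [hrange, ← adjoin_adjoin_left] at hg
  exact htr.sq_ne_of_mem_adjoin_simple hg

theorem algebraicIndependent_of_transcendental_adjoin_image_Iio {ι F A : Type*} [LinearOrder ι]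
    [Field F] [CommRing A] [Nontrivial A] [Algebra F A] {x : ι → A}
    (hx : ∀ i, Transcendental (Algebra.adjoin F (x '' Iio i)) (x i)) :
    AlgebraicIndependent F x := by
  classical
  suffices h : ∀ s : Finset ι, AlgebraicIndepOn F x s from
    algebraicIndependent_of_finite_type fun t ht => ht.coe_toFinset ▸ h ht.toFinset
  intro s
  induction s using Finset.induction_on_max with
  | empty =>
    have : IsEmpty ((∅ : Finset ι) : Set ι) := by simp
    exact algebraicIndependent_empty_type_iff.mpr (algebraMap F A).injective
  | insert a s hlt hs =>
    rw [Finset.coe_insert]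
    exact hs.insert <| (hx a).of_tower_top_of_subalgebra_le <|
      Algebra.adjoin_mono <| image_mono fun b hb => hlt b hb

theorem mk_setOf_isAlgebraic_adjoin_lt {F E : Type u} [Field F] [Field E] [Algebra F E]
    {κ : Cardinal.{u}} (hκ : ℵ₀ < κ) (hF : #F < κ) {s : Set E} (hs : #s < κ) :
    #{x : E | IsAlgebraic (adjoin F s) x} < κ :=
  calc #{x : E | IsAlgebraic (adjoin F s) x}
    _ ≤ max #(adjoin F s) ℵ₀ := Algebraic.cardinalMk_le_max _ _
    _ < κ := max_lt ((cardinalMk_adjoin_le F s).trans_lt (max_lt (max_lt hF hs) hκ)) hκ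

open Ordinal in
theorem exists_algebraicIndependent_forall_mem {F E ι : Type u} [Field F] [Field E]
    [Algebra F E] [LinearOrder ι] [WellFoundedLT ι] (hι : (#ι).ord = typeLT ι)
    (hℵ₀ : ℵ₀ < #ι) (hF : #F < #ι) {W : ι → Set E} (hW : ∀ i, #ι ≤ #(W i)) :
    ∃ t : ι → E, AlgebraicIndependent F t ∧ ∀ i, t i ∈ W i := by
  have hnext (i : ι) {s : Set E} (hs : #s < #ι) :
      ∃ x, x ∈ W i ∧ Transcendental (adjoin F s) x := by
    by_contra! h
    exact (hW i).not_gt <| (mk_le_mk_of_subset fun x hx => not_not.mp (h x hx)).trans_lt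
      (mk_setOf_isAlgebraic_adjoin_lt hℵ₀ hF hs)
  let t : ι → E := WellFoundedLT.fix fun i prev => Classical.epsilon fun x =>
    x ∈ W i ∧ Transcendental (adjoin F (range fun j : Iio i => prev j j.2)) x
  have ht (i : ι) : t i ∈ W i ∧ Transcendental (adjoin F (t '' Iio i)) (t i) := by
    rw [image_eq_range]
    unfold t
    rw [WellFoundedLT.fix_eq]
    exact Classical.epsilon_spec (hnext i (mk_range_le.trans_lt (mk_Iio_lt i hι)))
  exact ⟨t, algebraicIndependent_of_transcendental_adjoin_image_Iio fun i =>
    transcendental_adjoin_iff.mp (ht i).2, fun i => (ht i).1⟩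

theorem continuum_le_mk_setOf_mem_or_sq_notMem (B : Set ℝ) :
    𝔠 ≤ #{x : ℝ | x ∈ B ∨ x ^ 2 ∉ B} := by
  set W := {x : ℝ | x ∈ B ∨ x ^ 2 ∉ B}
  -- if `x ∉ W` then `x ^ 2 ∈ B`, so `x ^ 2 ∈ W`
  have hcover : Set.univ ⊆ W ∪ (Real.sqrt '' W ∪ (fun y => -√y) '' W) := by
    intro x _
    by_cases hx : x ∈ W
    · exact Or.inl hx
    have hx2 : x ^ 2 ∈ W := Or.inl (not_not.mp (not_or.mp hx).2)
    rcases abs_choice x with h | h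
    · exact Or.inr (Or.inl ⟨x ^ 2, hx2, by rw [Real.sqrt_sq_eq_abs, h]⟩)
    · exact Or.inr (Or.inr ⟨x ^ 2, hx2,
        show -√(x ^ 2) = x by rw [Real.sqrt_sq_eq_abs, h, neg_neg]⟩)
  by_contra! hW
  have hsmall : #(W ∪ (Real.sqrt '' W ∪ (fun y => -√y) '' W) : Set ℝ) < 𝔠 :=
    (mk_union_le _ _).trans_lt <| add_lt_of_lt aleph0_le_continuum hW <|
      (mk_union_le _ _).trans_lt <| add_lt_of_lt aleph0_le_continuum
        (mk_image_le.trans_lt hW) (mk_image_le.trans_lt hW)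
  exact hsmall.not_ge (by simpa [mk_univ, mk_real] using mk_le_mk_of_subset hcover)

theorem exists_setOf_measurableSet_subset_range {ι : Type} (hι : 𝔠 ≤ #ι) :
    ∃ B : ι → Set ℝ, {S : Set ℝ | MeasurableSet S} ⊆ range B := by
  have hBorel : {S : Set ℝ | MeasurableSet S} =
      {S | @MeasurableSet ℝ (MeasurableSpace.generateFrom (range Iio)) S} := by
    rw [← borel_eq_generateFrom_Iio]
  have hcard : #{S : Set ℝ | MeasurableSet S} ≤ #ι := by
    rw [hBorel]
    exact hι.trans' <|
      MeasurableSpace.cardinal_measurableSet_le_continuum (mk_range_le.trans mk_real.le)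
  obtain ⟨f⟩ := hcard
  have : Nonempty {S : Set ℝ | MeasurableSet S} := ⟨⟨∅, by simp⟩⟩
  obtain ⟨g, hg⟩ : ∃ g : ι → {S : Set ℝ | MeasurableSet S}, Function.Surjective g :=
    ⟨_, Function.invFun_surjective f.injective⟩
  exact ⟨fun i => g i, fun S hS => (hg ⟨S, hS⟩).imp fun _ hi => congrArg Subtype.val hi⟩

theorem Dense.preorderTopology_eq {α : Type*} [LinearOrder α] [TopologicalSpace α]
    [OrderTopology α] [DenselyOrdered α] {s : Set α} (hs : Dense s) :
    Preorder.topology s = instTopologicalSpaceSubtype :=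
  (induced_orderTopology (Subtype.val : s → α) Iff.rfl fun hxy =>
    let ⟨z, hz, hzxy⟩ := hs.exists_between hxy
    ⟨⟨z, hz⟩, hzxy⟩).topology_eq_generate_intervals.symm

theorem Subfield.dense_coe_real (K : Subfield ℝ) : Dense (K : Set ℝ) :=
  Rat.denseRange_cast.mono <| range_subset_iff.mpr fun q => SubfieldClass.ratCast_mem K q

/-- There is a subfield `K ⊆ ℝ` of cardinality `𝔠` such that the set `D = {y² | y ∈ K}` of
squares of `K` is not a member of the Borel σ-algebra generated by the order topology on `K`,
where `K` carries the linear order inherited from `ℝ`. -/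
theorem exists_subfield_with_nonBorel_squares_order_topology :
    ∃ K : Subfield ℝ, #K = Cardinal.continuum ∧
      ¬ @MeasurableSet K (@borel K (Preorder.topology K)) {d : K | ∃ y : K, d = y ^ 2} := by
  let ι := (Cardinal.ord.{0} 𝔠).ToType
  have hι : #ι = 𝔠 := by simp [ι]
  obtain ⟨B, hB⟩ := exists_setOf_measurableSet_subset_range hι.ge
  obtain ⟨t, ht_indep, ht_mem⟩ := exists_algebraicIndependent_forall_mem (F := ℚ)
    (W := fun i => {x | x ∈ B i ∨ x ^ 2 ∉ B i}) (by simp [ι]) (hι ▸ aleph0_lt_continuum)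
    (by simp [hι, aleph0_lt_continuum])
    fun i => hι ▸ continuum_le_mk_setOf_mem_or_sq_notMem (B i)
  set K := (adjoin ℚ (range t)).toSubfield
  have ht_K (i : ι) : t i ∈ K := subset_adjoin ℚ _ (mem_range_self i)
  refine ⟨K, le_antisymm ((mk_subtype_le _).trans_eq mk_real) ?_, fun hD => ?_⟩
  · exact hι ▸ mk_le_of_injective (f := fun i => (⟨t i, ht_K i⟩ : K))
      fun i j hij => ht_indep.injective (congrArg Subtype.val hij)
  rw [show Preorder.topology K = _ from K.dense_coe_real.preorderTopology_eq, borel_comap] at hD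
  obtain ⟨S, hS, hSD⟩ := MeasurableSpace.measurableSet_comap.mp hD
  obtain ⟨i, rfl⟩ := hB hS
  rcases ht_mem i with h | h
  · obtain ⟨y, hy⟩ : (⟨t i, ht_K i⟩ : K) ∈ {d : K | ∃ y : K, d = y ^ 2} := hSD ▸ h
    exact ht_indep.sq_ne_of_mem_adjoin_range i y.2 (congrArg Subtype.val hy).symm
  · have hsq : (⟨t i, ht_K i⟩ ^ 2 : K) ∈ Subtype.val ⁻¹' B i := hSD ▸ ⟨_, rfl⟩
    exact h hsq
end

section
/- There exists a subfield K ⊆ ℝ of cardinality 𝔠 such that the set of squares D = {y² | y ∈ K}, regarded as a subset of ℝ, is not a Borel subset of ℝ, i.e. D ∉ 𝓑(ℝ). -/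
/-!
Over `ℚ`, the reals have transcendence degree `𝔠`, so an algebraically independent family
`x : ℝ ⊕ ℝ → ℝ` exists. The fields `K_S = ℚ(x (inl r), x (inr s) | r ∈ ℝ, s ∈ S)` for `S ⊆ ℝ` all
have cardinality `𝔠` and are pairwise distinct, giving `2^𝔠` of them. A subfield `K` of `ℝ` is
determined by its set of squares, since `a = ((a + 1) / 2)² - ((a - 1) / 2)²`. If all these sets of
squares were Borel, they would be `2^𝔠` distinct Borel sets, whereas there are only `𝔠` Borel sets.
-/

open Cardinal

universe u v

theorem Subfield.le_of_squares_subset {F : Type*} [Field F] (h2 : (2 : F) ≠ 0)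
    {K L : Subfield F} (h : {x | ∃ y ∈ K, x = y ^ 2} ⊆ {x | ∃ y ∈ L, x = y ^ 2}) : K ≤ L := by
  intro a ha
  have h2K : (2 : F) ∈ K := ofNat_mem K 2
  obtain ⟨y, hy, hy2⟩ := h ⟨(a + 1) / 2, div_mem (add_mem ha (one_mem K)) h2K, rfl⟩
  obtain ⟨z, hz, hz2⟩ := h ⟨(a - 1) / 2, div_mem (sub_mem ha (one_mem K)) h2K, rfl⟩
  have hdiff : a = ((a + 1) / 2) ^ 2 - ((a - 1) / 2) ^ 2 := by field_simp; ring
  rw [hdiff, hy2, hz2]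
  exact sub_mem (pow_mem hy 2) (pow_mem hz 2)

theorem Subfield.squares_injective {F : Type*} [Field F] (h2 : (2 : F) ≠ 0) :
    Function.Injective fun K : Subfield F => {x | ∃ y ∈ K, x = y ^ 2} := fun _ _ h =>
  le_antisymm (le_of_squares_subset h2 h.le) (le_of_squares_subset h2 h.ge)

theorem cardinal_measurableSet_le_continuum {α : Type*} [TopologicalSpace α]
    [SecondCountableTopology α] [MeasurableSpace α] [BorelSpace α] :
    #{s : Set α | MeasurableSet s} ≤ 𝔠 := by
  obtain ⟨b, hb_count, -, hb⟩ := TopologicalSpace.exists_countable_basis α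
  rw [‹BorelSpace α›.measurable_eq, borel_eq_generateFrom_of_subbasis hb.eq_generateFrom]
  exact MeasurableSpace.cardinal_measurableSet_le_continuum
    (hb_count.le_aleph0.trans aleph0_le_continuum)

section AlgebraicIndependent

variable {F E ι : Type*} [Field F] [Field E] [Algebra F E] {x : ι → E}

theorem AlgebraicIndependent.mem_adjoin_image_iff (hx : AlgebraicIndependent F x)
    {s : Set ι} {i : ι} : x i ∈ IntermediateField.adjoin F (x '' s) ↔ i ∈ s := by
  refine ⟨fun hmem => by_contra fun hi => ?_,
    fun hi => IntermediateField.subset_adjoin F _ ⟨i, hi, rfl⟩⟩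
  have htr := IntermediateField.transcendental_adjoin_iff.2 (hx.transcendental_adjoin hi)
  exact htr (isAlgebraic_algebraMap (⟨x i, hmem⟩ : IntermediateField.adjoin F (x '' s)))

theorem AlgebraicIndependent.adjoin_image_injective (hx : AlgebraicIndependent F x) :
    Function.Injective fun s : Set ι => IntermediateField.adjoin F (x '' s) := by
  intro s t (hst : IntermediateField.adjoin F (x '' s) = _)
  ext i
  rw [← hx.mem_adjoin_image_iff, ← hx.mem_adjoin_image_iff, hst]

end AlgebraicIndependent

theorem exists_algebraicIndependent_of_cardinalMk_le {R : Type u} {A : Type v} [CommRing R]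
    [Nontrivial R] [CommRing A] [NoZeroDivisors A] [Algebra R A] [FaithfulSMul R A]
    {ι : Type v} (h : #ι ≤ Algebra.trdeg R A) : ∃ x : ι → A, AlgebraicIndependent R x := by
  obtain ⟨T, hT⟩ := exists_isTranscendenceBasis R A
  rw [← hT.cardinalMk_eq_trdeg] at h
  obtain ⟨f⟩ := h
  exact ⟨_, hT.1.comp f f.injective⟩

theorem Algebra.trdeg_eq_cardinalMk_of_countable {F : Type u} {E : Type v} [Field F] [Countable F]
    [Field E] [Algebra F E] (hE : ℵ₀ < #E) : Algebra.trdeg F E = #E := by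
  have hF : lift.{v} #F ≤ ℵ₀ := by simp
  have hE' : ℵ₀ < lift.{u} #E := by simpa using hE
  have : Algebra.Transcendental F E := by
    rw [Algebra.transcendental_iff_not_isAlgebraic]
    intro halg
    exact ((Algebra.IsAlgebraic.lift_cardinalMk_le_max F E).trans (max_le hF le_rfl)).not_gt hE'
  obtain ⟨T, hT⟩ := exists_isTranscendenceBasis F E
  have := hT.nonempty_iff_transcendental.2 this
  rw [← hT.cardinalMk_eq_trdeg]
  have hle : lift.{u} #E ≤ max (lift.{u} #T) ℵ₀ := by
    rw [← lift_umax.{v, u}, hT.lift_cardinalMk_eq_max_lift]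
    exact max_le (max_le (hF.trans (le_max_right _ _)) (le_max_left _ _)) (le_max_right _ _)
  rcases le_max_iff.1 hle with h | h
  · exact le_antisymm (mk_set_le T) (lift_le.1 h)
  · exact absurd h hE'.not_ge

theorem Set.union_image_inr_injective {α β : Type*} (s : Set α) :
    Function.Injective fun t : Set β => Sum.inl '' s ∪ Sum.inr '' t := by
  intro t t' h
  simpa [Set.preimage_image_eq _ Sum.inr_injective] using congrArg (Set.preimage Sum.inr) h

theorem two_pow_le_card_subfields_of_countable (F : Type u) {E : Type v} [Field F] [Countable F]
    [Field E] [Algebra F E] (hE : ℵ₀ < #E) : 2 ^ #E ≤ #{K : Subfield E // #K = #E} := by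
  have hsum : #(E ⊕ E) ≤ Algebra.trdeg F E := by
    rw [Algebra.trdeg_eq_cardinalMk_of_countable hE, mk_sum, lift_id, add_eq_self hE.le]
  obtain ⟨x, hx⟩ := exists_algebraicIndependent_of_cardinalMk_le hsum
  let K : Set E → IntermediateField F E := fun S =>
    IntermediateField.adjoin F (x '' (Sum.inl '' Set.univ ∪ Sum.inr '' S))
  have hK : ∀ S, #(K S) = #E := by
    intro S
    refine le_antisymm (mk_subtype_le _) (mk_le_of_injective (f := fun r : E =>
      (⟨x (Sum.inl r), hx.mem_adjoin_image_iff.2 (Or.inl ⟨r, trivial, rfl⟩)⟩ : K S)) ?_)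
    intro r r' h
    exact Sum.inl_injective (hx.injective (congrArg Subtype.val h))
  rw [← mk_set]
  refine mk_le_of_injective (f := fun S => ⟨(K S).toSubfield, hK S⟩) ?_
  intro S S' h
  exact Set.union_image_inr_injective _ (hx.adjoin_image_injective
    (IntermediateField.toSubfield_injective (congrArg Subtype.val h)))

/-- There is a subfield `K ⊆ ℝ` of cardinality `𝔠` such that the set `D = {y² | y ∈ K}` of
squares of `K`, regarded as a subset of `ℝ`, is not a Borel subset of `ℝ`.
(The measurable sets of `ℝ` are exactly the Borel sets.) -/
theorem exists_subfield_with_nonBorel_squares :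
    ∃ K : Subfield ℝ, #K = Cardinal.continuum ∧
      ¬ MeasurableSet {x : ℝ | ∃ y ∈ K, x = y ^ 2} := by
  by_contra! h
  have hBorel : #{K : Subfield ℝ // #K = 𝔠} ≤ 𝔠 :=
    (mk_le_of_injective (f := fun K => (⟨_, h K.1 K.2⟩ : {s : Set ℝ | MeasurableSet s}))
      fun K L hKL => Subtype.ext (Subfield.squares_injective two_ne_zero
        (congrArg Subtype.val hKL))).trans cardinal_measurableSet_le_continuum
  have hsubfields := two_pow_le_card_subfields_of_countable ℚ (E := ℝ)
    (mk_real ▸ aleph0_lt_continuum)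
  rw [mk_real] at hsubfields
  exact (cantor 𝔠).not_ge (hsubfields.trans hBorel)
end

section
/- There exists a family of 2^𝔠 pairwise distinct subfields of ℝ whose sets of squares are pairwise distinct; consequently, there exist 2^𝔠 many subfields K ⊆ ℝ such that the set of squares {y² | y ∈ K} is not a Borel subset of ℝ. -/
open Cardinal Set

universe u

/-! Fix a transcendence basis `B` of `ℝ` over `ℚ`; it has cardinality `𝔠`. For `S ⊆ B` let `K_S`
be the field generated by `S`. An element `b ∈ B \ T` is transcendental over `K_T`, so neither
`b` nor `-b` lies in `K_T` and `b²` is a square of `K_S` but not of `K_T` as soon as `b ∈ S`.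
Hence `S ↦ {y² | y ∈ K_S}` is injective on the `2^𝔠` subsets of `B`, whereas there are only `𝔠`
Borel sets. -/

namespace Subfield

variable {E : Type*} [Field E]

def squares (K : Subfield E) : Set E := {x | ∃ y ∈ K, x = y ^ 2}

theorem mem_of_sq_mem_squares {K : Subfield E} {a : E} (h : a ^ 2 ∈ K.squares) : a ∈ K := by
  obtain ⟨y, hy, hay⟩ := h
  rcases sq_eq_sq_iff_eq_or_eq_neg.1 hay with rfl | rfl
  · exact hy
  · exact K.neg_mem hy

end Subfield

namespace AlgebraicIndependent

variable {ι F E : Type*} [Field F] [Field E] [Algebra F E] {x : ι → E}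

theorem notMem_subfieldClosure_image (hx : AlgebraicIndependent F x) {s : Set ι} {i : ι}
    (hi : i ∉ s) : x i ∉ Subfield.closure (x '' s) := by
  intro hmem
  have hadj : x i ∈ IntermediateField.adjoin F (x '' s) :=
    Subfield.closure_le.2 (IntermediateField.subset_adjoin F _) hmem
  refine IntermediateField.transcendental_adjoin_iff.2 (hx.transcendental_adjoin hi) ?_
  exact isAlgebraic_algebraMap (⟨x i, hadj⟩ : IntermediateField.adjoin F (x '' s))

theorem subset_of_squares_subfieldClosure_subset (hx : AlgebraicIndependent F x)
    {s t : Set ι} (h : (Subfield.closure (x '' s)).squares ⊆ (Subfield.closure (x '' t)).squares) :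
    s ⊆ t := by
  intro i hi
  by_contra hit
  refine hx.notMem_subfieldClosure_image hit (Subfield.mem_of_sq_mem_squares (h ?_))
  exact ⟨x i, Subfield.subset_closure (mem_image_of_mem x hi), rfl⟩

theorem injective_squares_subfieldClosure_image (hx : AlgebraicIndependent F x) :
    Function.Injective fun s : Set ι => (Subfield.closure (x '' s)).squares := fun _ _ h =>
  (hx.subset_of_squares_subfieldClosure_subset h.le).antisymm
    (hx.subset_of_squares_subfieldClosure_subset h.ge)

end AlgebraicIndependent

theorem IsTranscendenceBasis.cardinalMk_eq_of_max_lt {F E ι : Type u} [Field F] [Field E]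
    [Algebra F E] {x : ι → E} (hx : IsTranscendenceBasis F x) (hE : max #F ℵ₀ < #E) :
    #ι = #E := by
  have : Nonempty ι := by
    by_contra hempty
    have := hx.isEmpty_iff_isAlgebraic.1 (not_nonempty_iff.1 hempty)
    exact (Algebra.IsAlgebraic.cardinalMk_le_max F E).not_gt hE
  have h := hx.lift_cardinalMk_eq_max_lift
  simp only [lift_id] at h
  refine le_antisymm (h ▸ le_max_of_le_left (le_max_right _ _)) (not_lt.1 fun hlt => ?_)
  have hF : #F < #E := (le_max_left _ _).trans_lt hE
  have hω : ℵ₀ < #E := (le_max_right _ _).trans_lt hE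
  exact (max_lt (max_lt hF hlt) hω).ne h.symm

theorem MeasurableSpace.mk_setOf_measurableSet_le_continuum (α : Type*) [MeasurableSpace α]
    [MeasurableSpace.CountablyGenerated α] : #{s : Set α | MeasurableSet s} ≤ 𝔠 := by
  have h := cardinal_measurableSet_le_continuum
    ((countable_countableGeneratingSet (α := α)).le_aleph0.trans aleph0_le_continuum)
  rwa [generateFrom_countableGeneratingSet] at h

theorem mk_setOf_not_measurableSet_eq {ι α : Type u} [MeasurableSpace α]
    [MeasurableSpace.CountablyGenerated α] {g : ι → Set α} (hg : Function.Injective g)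
    (hι : 𝔠 < #ι) : #{i | ¬ MeasurableSet (g i)} = #ι := by
  have : Infinite ι := infinite_iff.2 (aleph0_le_continuum.trans hι.le)
  have hmeas : #{i | MeasurableSet (g i)} ≤ 𝔠 :=
    (mk_le_of_injective (f := fun i : {i | MeasurableSet (g i)} => (⟨g i, i.2⟩ :
      {s : Set α | MeasurableSet s})) fun i j h => Subtype.ext (hg (congrArg Subtype.val h))).trans
      (MeasurableSpace.mk_setOf_measurableSet_le_continuum α)
  exact mk_compl_of_infinite _ (hmeas.trans_lt hι)

/-- There is a family of `2^𝔠` pairwise distinct subfields of `ℝ` whose sets of squares are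
pairwise distinct; consequently, there are `2^𝔠` many subfields `K ⊆ ℝ` whose set of squares
`{y² | y ∈ K}` is not a Borel subset of `ℝ`. -/
theorem exists_two_pow_continuum_subfields_with_nonBorel_squares :
    (∃ (ι : Type) (F : ι → Subfield ℝ), #ι = 2 ^ Cardinal.continuum ∧
      Function.Injective F ∧
      (∀ i j : ι, i ≠ j →
        {x : ℝ | ∃ y ∈ F i, x = y ^ 2} ≠ {x : ℝ | ∃ y ∈ F j, x = y ^ 2})) ∧
    2 ^ Cardinal.continuum ≤
      #{K : Subfield ℝ // ¬ MeasurableSet {x : ℝ | ∃ y ∈ K, x = y ^ 2}} := by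
  obtain ⟨B, hB⟩ := exists_isTranscendenceBasis ℚ ℝ
  let F : Set B → Subfield ℝ := fun S => Subfield.closure (Subtype.val '' S)
  have hsq : Function.Injective (Subfield.squares ∘ F) :=
    hB.1.injective_squares_subfieldClosure_image
  have hB_card : #B = 𝔠 := by
    refine hB.cardinalMk_eq_of_max_lt ?_ |>.trans mk_real
    rw [mk_real, Cardinal.mkRat, max_self]
    exact aleph0_lt_continuum
  have hcard : #(Set B) = 2 ^ 𝔠 := by rw [mk_set, hB_card]
  refine ⟨⟨Set B, F, hcard, hsq.of_comp, fun _ _ => hsq.ne⟩, ?_⟩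
  calc 2 ^ 𝔠 = #{S : Set B | ¬ MeasurableSet (F S).squares} :=
        ((mk_setOf_not_measurableSet_eq hsq (hcard ▸ cantor 𝔠)).trans hcard).symm
    _ ≤ _ := mk_le_of_injective (f := fun S => ⟨F S, S.2⟩) fun S T h =>
        Subtype.ext (hsq.of_comp (congrArg Subtype.val h))
end

section
/- Let K be the fraction field of the polynomial ring over ℚ in a family of variables indexed by a set of cardinality 𝔠 (the rational function field ℚ(tᵢ | i < 𝔠)). Then there is a family of 2^𝔠 orderings on K, each making K a non-archimedean ordered field, which are pairwise non-isomorphic: for any two distinct orderings <₁ and <₂ in the family, there is no ring isomorphism f : K → K that is order-preserving from (K, <₁) to (K, <₂). -/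
open Cardinal

/-- A relation `r` (strict ordering) on a field `K` is a field ordering if it is a strict
total order compatible with the field structure: addition preserves it, and products of
positive elements are positive (i.e. it makes `K` a linearly ordered field). -/
def IsFieldOrdering {K : Type*} [Field K] (r : K → K → Prop) : Prop :=
  IsStrictTotalOrder K r ∧ (∀ a b c : K, r a b → r (a + c) (b + c)) ∧
    (∀ a b : K, r 0 a → r 0 b → r 0 (a * b))

/-- An ordering `r` on a field `K` is archimedean if every element is below some natural
number. -/
def IsArchimedeanOrdering {K : Type*} [Field K] (r : K → K → Prop) : Prop :=
  ∀ x : K, ∃ n : ℕ, r x (n : K)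

/-!
Identify `ι` with `Option ι`, so that the variables are `t_none` and `t_a` for `a : ι`. Fix
algebraically independent reals `r : ι ⊕ ι → ℝ`. For `T ⊆ ι`, embed `ℚ(t)` into the hyperreals by
`t_none ↦ ω` and `t_a ↦ r (inl a)` if `a ∈ T`, `t_a ↦ r (inr a)` otherwise, and pull back the
order; it is non-archimedean because `ω` is infinite.

An order-preserving isomorphism preserves the set of reals whose rational cut is filled by an
element of the field. If `F ⊆ ℝ` and `p, q ∈ F[X]`, the standard part of a finite `p(ω) / q(ω)`
is the quotient of the coefficients of `p` and `q` in degree `max (deg p) (deg q)`, so it is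
algebraic over `F`. Hence `r (inl a)` is filled for the ordering of `T` exactly when `a ∈ T`, and
the `2 ^ 𝔠` subsets `T` give pairwise non-isomorphic orderings.
-/

open Polynomial ArchimedeanClass

section CutValues

variable {K K' : Type*} [DivisionRing K] [DivisionRing K']

def cutValues (r : K → K → Prop) : Set ℝ :=
  {x | ∃ a : K, ∀ q : ℚ, r q a ↔ (q : ℝ) < x}

theorem cutValues_subset_of_ringHom {r : K → K → Prop} {s : K' → K' → Prop} (f : K →+* K')
    (hf : ∀ a b, r a b ↔ s (f a) (f b)) : cutValues r ⊆ cutValues s := by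
  rintro x ⟨a, ha⟩
  exact ⟨f a, fun q => by rw [← map_ratCast f, ← hf]; exact ha q⟩

theorem cutValues_eq_of_ringEquiv {r : K → K → Prop} {s : K' → K' → Prop} (f : K ≃+* K')
    (hf : ∀ a b, r a b ↔ s (f a) (f b)) : cutValues r = cutValues s :=
  (cutValues_subset_of_ringHom f.toRingHom hf).antisymm <|
    cutValues_subset_of_ringHom f.symm.toRingHom fun a b => by
      simpa using (hf (f.symm a) (f.symm b)).symm

end CutValues

section Comap

variable {K L : Type*} [Field K] [Field L] [LinearOrder L] (φ : K →+* L)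

theorem isFieldOrdering_comap [IsStrictOrderedRing L] :
    IsFieldOrdering fun a b => φ a < φ b := by
  let _ : LinearOrder K := LinearOrder.lift' φ φ.injective
  refine ⟨inferInstanceAs (IsStrictTotalOrder K (· < ·)), fun a b c h => ?_, fun a b ha hb => ?_⟩
  · simpa only [map_add] using add_lt_add_left h (φ c)
  · simpa only [map_zero, map_mul] using mul_pos (by simpa using ha) (by simpa using hb)

theorem not_isArchimedeanOrdering_comap {x : K} (hx : ∀ n : ℕ, (n : L) < φ x) :
    ¬IsArchimedeanOrdering fun a b => φ a < φ b := fun h => by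
  obtain ⟨n, hn⟩ := h x
  exact (hx n).asymm (by simpa using hn)

end Comap

theorem eval₂_mul_inv_pow_eq_eval₂_reflect {R S : Type*} [Semiring R] [Field S] (i : R →+* S)
    {x : S} (hx : x ≠ 0) {p : R[X]} {d : ℕ} (hd : p.natDegree ≤ d) :
    p.eval₂ i x * (x ^ d)⁻¹ = (reflect d p).eval₂ i x⁻¹ := by
  let _ := invertibleOfNonzero hx
  rw [← eval₂_reflect_mul_pow i x d p hd, invOf_eq_inv, mul_inv_cancel_right₀ (pow_ne_zero d hx)]

section InfiniteElement

variable {L : Type*} [Field L] [LinearOrder L] [IsStrictOrderedRing L]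

theorem mk_nonneg_and_stdPart_eq_of_ratCast_lt_iff (f : ℝ →+*o L) {y : L} {x : ℝ}
    (h : ∀ q : ℚ, (q : L) < y ↔ (q : ℝ) < x) : 0 ≤ mk y ∧ stdPart y = x := by
  have hl : ∀ s < x, f s ≤ y := fun s hs => by
    obtain ⟨q, hsq, hqx⟩ := exists_rat_btwn hs
    calc f s ≤ f q := f.monotone' hsq.le
      _ = q := map_ratCast f q
      _ ≤ y := ((h q).2 hqx).le
  have hr : ∀ s > x, y ≤ f s := fun s hs => by
    obtain ⟨q, hxq, hqs⟩ := exists_rat_btwn hs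
    calc y ≤ q := not_lt.1 fun hq => hxq.not_gt ((h q).1 hq)
      _ = f q := (map_ratCast f q).symm
      _ ≤ f s := f.monotone' hqs.le
  exact ⟨mk_nonneg_of_le_of_le_of_archimedean f (hl (x - 1) (by linarith))
    (hr (x + 1) (by linarith)), stdPart_eq f hl hr⟩

variable (f : ℝ →+*o L)

theorem mk_eval₂_nonneg (p : ℝ[X]) {z : L} (hz : 0 ≤ mk z) :
    0 ≤ mk (p.eval₂ (f : ℝ →+* L) z) := by
  induction p using Polynomial.induction_on' with
  | add p q hp hq => exact (le_min hp hq).trans (by simpa only [eval₂_add] using min_le_mk_add _ _)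
  | monomial n c =>
    rw [eval₂_monomial, mk_mul, mk_pow]
    exact add_nonneg (mk_map_nonneg_of_archimedean f c) (nsmul_nonneg hz n)

theorem stdPart_eval₂_of_mk_pos (p : ℝ[X]) {z : L} (hz : 0 < mk z) :
    stdPart (p.eval₂ (f : ℝ →+* L) z) = p.coeff 0 := by
  conv_lhs => rw [← divX_mul_X_add p]
  rw [eval₂_add, eval₂_mul, eval₂_X, eval₂_C, stdPart_add_eq_right, RingHom.coe_coe,
    stdPart_map_real]
  rw [mk_mul]
  exact hz.trans_le (le_add_of_nonneg_left (mk_eval₂_nonneg f _ hz.le))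

variable {ω : L}

theorem mk_eval₂_mul_inv_pow_nonneg (hω : mk ω < 0) {p : ℝ[X]} {d : ℕ}
    (hd : p.natDegree ≤ d) : 0 ≤ mk (p.eval₂ (f : ℝ →+* L) ω * (ω ^ d)⁻¹) := by
  rw [eval₂_mul_inv_pow_eq_eval₂_reflect _ (by rintro rfl; simp at hω) hd]
  exact mk_eval₂_nonneg f _ (by simpa using Or.inl hω : 0 < mk ω⁻¹).le

theorem stdPart_eval₂_mul_inv_pow (hω : mk ω < 0) {p : ℝ[X]} {d : ℕ} (hd : p.natDegree ≤ d) :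
    stdPart (p.eval₂ (f : ℝ →+* L) ω * (ω ^ d)⁻¹) = p.coeff d := by
  rw [eval₂_mul_inv_pow_eq_eval₂_reflect _ (by rintro rfl; simp at hω) hd,
    stdPart_eval₂_of_mk_pos f _ (by simpa using Or.inl hω), coeff_reflect, revAt_zero]

theorem eval₂_ne_zero_of_mk_neg (hω : mk ω < 0) {p : ℝ[X]} (hp : p ≠ 0) :
    p.eval₂ (f : ℝ →+* L) ω ≠ 0 := by
  intro h
  have := stdPart_eval₂_mul_inv_pow f (p := p) hω le_rfl
  rw [h, zero_mul, stdPart_zero] at this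
  exact leadingCoeff_ne_zero.2 hp this.symm

theorem eval₂RingHom_injective_of_mk_neg (hω : mk ω < 0) :
    Function.Injective (eval₂RingHom (f : ℝ →+* L) ω) :=
  (injective_iff_map_eq_zero _).2 fun _ hp => by_contra fun h => eval₂_ne_zero_of_mk_neg f hω h hp

theorem exists_stdPart_div_mul_coeff_eq (hω : mk ω < 0) {p q : ℝ[X]} (hq : q ≠ 0)
    (hy : 0 ≤ mk (p.eval₂ (f : ℝ →+* L) ω / q.eval₂ (f : ℝ →+* L) ω)) :
    ∃ d, q.coeff d ≠ 0 ∧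
      stdPart (p.eval₂ (f : ℝ →+* L) ω / q.eval₂ (f : ℝ →+* L) ω) * q.coeff d = p.coeff d := by
  set d := max p.natDegree q.natDegree
  have hq' := eval₂_ne_zero_of_mk_neg f hω hq
  have hω' : ω ^ d ≠ 0 := pow_ne_zero _ (by rintro rfl; simp at hω)
  -- Divided by `ω ^ d`, numerator and denominator become finite, with standard parts the
  -- coefficients in degree `d`.
  have hmul : p.eval₂ (f : ℝ →+* L) ω / q.eval₂ (f : ℝ →+* L) ω *
      (q.eval₂ (f : ℝ →+* L) ω * (ω ^ d)⁻¹) = p.eval₂ (f : ℝ →+* L) ω * (ω ^ d)⁻¹ := by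
    field_simp
  have key : stdPart (p.eval₂ (f : ℝ →+* L) ω / q.eval₂ (f : ℝ →+* L) ω) * q.coeff d =
      p.coeff d := by
    rw [← stdPart_eval₂_mul_inv_pow f hω (le_max_right _ _),
      ← stdPart_eval₂_mul_inv_pow f hω (le_max_left _ _),
      ← stdPart_mul hy (mk_eval₂_mul_inv_pow_nonneg f hω (le_max_right _ _)), hmul]
  refine ⟨d, fun hqd => ?_, key⟩
  rw [hqd, mul_zero] at key
  have hdq : d ≠ q.natDegree := fun h => leadingCoeff_ne_zero.2 hq (by rwa [h] at hqd)
  have hp : p ≠ 0 := by rintro rfl; simp [d] at hdq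
  have hdp : d = p.natDegree := (max_choice _ _).resolve_right hdq
  exact leadingCoeff_ne_zero.2 hp (by rw [leadingCoeff, ← hdp, key])

end InfiniteElement

theorem algebraicIndependent_option_elim_X {ι R A : Type*} [CommRing R] [CommRing A]
    [Algebra R A] {x : ι → A} (hx : AlgebraicIndependent R x) :
    AlgebraicIndependent R fun o : Option ι => o.elim (X : A[X]) fun i => C (x i) := by
  rw [algebraicIndependent_iff_injective_aeval]
  have : MvPolynomial.aeval (fun o : Option ι => o.elim (X : A[X]) fun i => C (x i)) =
      (mapAlgHom (MvPolynomial.aeval x)).comp (MvPolynomial.optionEquivLeft R ι).toAlgHom := by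
    ext (_ | i) <;> simp [MvPolynomial.optionEquivLeft_X_none, MvPolynomial.optionEquivLeft_X_some]
  rw [this]
  exact (map_injective _ hx).comp (MvPolynomial.optionEquivLeft R ι).injective

theorem coeff_aeval_mem_of_coeff_mem {σ R A : Type*} [CommSemiring R] [CommSemiring A]
    [Algebra R A] (F : Subalgebra R A) {w : σ → A[X]} (hw : ∀ i n, (w i).coeff n ∈ F)
    (P : MvPolynomial σ R) (n : ℕ) : (MvPolynomial.aeval w P).coeff n ∈ F := by
  have hP : MvPolynomial.aeval w P ∈ lifts (algebraMap F A) := by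
    refine MvPolynomial.eval₂_mem (fun m _ => ?_) fun i => (lifts_iff_coeff_lifts _).2 fun n =>
      ⟨⟨_, hw i n⟩, rfl⟩
    rw [Polynomial.algebraMap_apply, IsScalarTower.algebraMap_apply R F A]
    exact C_mem_lifts _ _
  obtain ⟨c, hc⟩ := (lifts_iff_coeff_lifts _).1 hP n
  exact hc ▸ c.2

theorem Subalgebra.isAlgebraic_of_mul_mem {R A : Type*} [CommRing R] [Field A] [Algebra R A]
    {F : Subalgebra R A} {x b c : A} (hb : b ∈ F) (hc : c ∈ F) (hc0 : c ≠ 0) (h : x * c = b) :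
    IsAlgebraic F x := by
  refine IsAlgebraic.of_mul (y := c) (mem_nonZeroDivisors_of_ne_zero hc0)
    (isAlgebraic_algebraMap (⟨c, hc⟩ : F)) ?_
  rw [mul_comm, h]
  exact isAlgebraic_algebraMap (⟨b, hb⟩ : F)

theorem exists_algebraicIndependent_real {κ : Type} (hκ : #κ ≤ 𝔠) :
    ∃ r : κ → ℝ, AlgebraicIndependent ℚ r := by
  obtain ⟨ι, x, hx⟩ := exists_isTranscendenceBasis' ℚ ℝ
  have : Algebra.Transcendental ℚ ℝ := by
    rw [Algebra.transcendental_iff_not_isAlgebraic]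
    intro _
    have := Algebra.IsAlgebraic.cardinalMk_le_max ℚ ℝ
    simp only [mk_real, Cardinal.mkRat, max_self] at this
    exact this.not_gt aleph0_lt_continuum
  have : Nonempty ι := hx.nonempty_iff_transcendental.2 this
  have hcard := hx.lift_cardinalMk_eq_max_lift
  simp only [lift_id, mk_real, Cardinal.mkRat] at hcard
  have hle : 𝔠 ≤ #ι := le_of_not_gt fun h => by
    have := max_lt (max_lt aleph0_lt_continuum h) aleph0_lt_continuum
    rw [← hcard] at this
    exact this.false
  obtain ⟨e⟩ := (Cardinal.le_def _ _).1 (hκ.trans hle)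
  exact ⟨x ∘ e, hx.1.comp e e.injective⟩

section Construction

open Hyperreal

variable {ι : Type*}

open Classical in
noncomputable def tagBy (T : Set ι) (a : ι) : ι ⊕ ι :=
  if a ∈ T then .inl a else .inr a

theorem tagBy_injective (T : Set ι) : Function.Injective (tagBy T) := by
  intro a b h
  unfold tagBy at h
  split_ifs at h <;> simpa using h

theorem tagBy_of_mem {T : Set ι} {a : ι} (h : a ∈ T) : tagBy T a = .inl a := if_pos h

theorem inl_notMem_range_tagBy {T : Set ι} {a : ι} (h : a ∉ T) :
    .inl a ∉ Set.range (tagBy T) := by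
  rintro ⟨b, hb⟩
  unfold tagBy at hb
  split_ifs at hb with hbT
  cases hb
  exact h hbT

variable (E : ι ≃ Option ι) (r : ι ⊕ ι → ℝ)

noncomputable def tagVar (T : Set ι) (i : ι) : ℝ[X] :=
  (E i).elim X fun a => C (r (tagBy T a))

theorem coeff_tagVar_mem (T : Set ι) (i : ι) (n : ℕ) :
    (tagVar E r T i).coeff n ∈ Algebra.adjoin ℚ (r '' Set.range (tagBy T)) := by
  unfold tagVar
  cases E i with
  | none => rw [Option.elim_none, coeff_X]; split_ifs <;> simp
  | some a =>
    rw [Option.elim_some, coeff_C]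
    split_ifs
    · exact Algebra.subset_adjoin ⟨_, ⟨a, rfl⟩, rfl⟩
    · exact zero_mem _

noncomputable def tagHom (T : Set ι) : MvPolynomial ι ℚ →+* ℝ* :=
  (eval₂RingHom (coeRingHom : ℝ →+* ℝ*) ω).comp (MvPolynomial.aeval (R := ℚ) (tagVar E r T))

theorem tagHom_apply (T : Set ι) (P : MvPolynomial ι ℚ) :
    tagHom E r T P = (MvPolynomial.aeval (tagVar E r T) P).eval₂ (coeRingHom : ℝ →+* ℝ*) ω :=
  rfl

variable {r}

theorem algebraicIndependent_tagVar (hr : AlgebraicIndependent ℚ r) (T : Set ι) :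
    AlgebraicIndependent ℚ (tagVar E r T) :=
  (algebraicIndependent_option_elim_X (hr.comp _ (tagBy_injective T))).comp E E.injective

theorem tagHom_injective (hr : AlgebraicIndependent ℚ r) (T : Set ι) :
    Function.Injective (tagHom E r T) :=
  (eval₂RingHom_injective_of_mk_neg coeRingHom archimedeanClassMk_omega_neg).comp
    (algebraicIndependent_iff_injective_aeval.1 (algebraicIndependent_tagVar E hr T))

noncomputable def tagEmbedding (hr : AlgebraicIndependent ℚ r) (T : Set ι) :
    FractionRing (MvPolynomial ι ℚ) →+* ℝ* :=
  IsFractionRing.lift (tagHom_injective E hr T)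

def tagOrder (hr : AlgebraicIndependent ℚ r) (T : Set ι)
    (x y : FractionRing (MvPolynomial ι ℚ)) : Prop :=
  tagEmbedding E hr T x < tagEmbedding E hr T y

theorem tagEmbedding_algebraMap (hr : AlgebraicIndependent ℚ r) (T : Set ι)
    (P : MvPolynomial ι ℚ) : tagEmbedding E hr T (algebraMap _ _ P) = tagHom E r T P :=
  IsFractionRing.lift_algebraMap _ _

theorem tagEmbedding_X_none (hr : AlgebraicIndependent ℚ r) (T : Set ι) :
    tagEmbedding E hr T (algebraMap _ _ (MvPolynomial.X (R := ℚ) (E.symm none))) = ω := by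
  simp [tagEmbedding_algebraMap, tagHom_apply, tagVar]

theorem tagEmbedding_X_some (hr : AlgebraicIndependent ℚ r) (T : Set ι) (a : ι) :
    tagEmbedding E hr T (algebraMap _ _ (MvPolynomial.X (R := ℚ) (E.symm (some a)))) =
      r (tagBy T a) := by
  simp [tagEmbedding_algebraMap, tagHom_apply, tagVar]

theorem inl_mem_cutValues_tagOrder (hr : AlgebraicIndependent ℚ r) {T : Set ι} {a : ι}
    (ha : a ∈ T) : r (.inl a) ∈ cutValues (tagOrder E hr T) :=
  ⟨_, fun q => by
    rw [tagOrder, map_ratCast, tagEmbedding_X_some, tagBy_of_mem ha, ← map_ratCast coeRingHom]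
    exact coe_lt_coe⟩

theorem isAlgebraic_of_mem_cutValues_tagOrder (hr : AlgebraicIndependent ℚ r) {T : Set ι}
    {x : ℝ} (hx : x ∈ cutValues (tagOrder E hr T)) :
    IsAlgebraic (Algebra.adjoin ℚ (r '' Set.range (tagBy T))) x := by
  obtain ⟨a, ha⟩ := hx
  obtain ⟨A, B, hB, rfl⟩ := IsFractionRing.div_surjective (A := MvPolynomial ι ℚ) a
  simp only [tagOrder, map_ratCast, map_div₀, tagEmbedding_algebraMap, tagHom_apply] at ha
  obtain ⟨hfin, hst⟩ := mk_nonneg_and_stdPart_eq_of_ratCast_lt_iff coeRingHom ha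
  have hB0 : MvPolynomial.aeval (tagVar E r T) B ≠ 0 := fun h =>
    nonZeroDivisors.ne_zero hB <| (injective_iff_map_eq_zero _).1
      (algebraicIndependent_iff_injective_aeval.1 (algebraicIndependent_tagVar E hr T)) B h
  obtain ⟨d, hd0, hd⟩ :=
    exists_stdPart_div_mul_coeff_eq coeRingHom archimedeanClassMk_omega_neg hB0 hfin
  rw [hst] at hd
  exact Subalgebra.isAlgebraic_of_mul_mem
    (coeff_aeval_mem_of_coeff_mem _ (coeff_tagVar_mem E r T) A d)
    (coeff_aeval_mem_of_coeff_mem _ (coeff_tagVar_mem E r T) B d) hd0 hd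

theorem inl_mem_cutValues_tagOrder_iff (hr : AlgebraicIndependent ℚ r) {T : Set ι} {a : ι} :
    r (.inl a) ∈ cutValues (tagOrder E hr T) ↔ a ∈ T :=
  ⟨fun h => by_contra fun ha => hr.transcendental_adjoin (inl_notMem_range_tagBy ha)
    (isAlgebraic_of_mem_cutValues_tagOrder E hr h), inl_mem_cutValues_tagOrder E hr⟩

end Construction

/-- Let `K = ℚ(tᵢ | i < 𝔠)` be the rational function field over `ℚ` in `𝔠` many variables,
i.e. the fraction field of the polynomial ring over `ℚ` in variables indexed by a set of
cardinality `𝔠`. Then there is a family of `2^𝔠` non-archimedean orderings of `K` that are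
pairwise non-isomorphic: for distinct members of the family, no ring automorphism of `K` is
order-preserving from the one to the other. -/
theorem exists_two_pow_continuum_nonarchimedean_orderings
    (ι : Type) (hι : #ι = Cardinal.continuum) :
    ∃ (J : Type) (R : J → (FractionRing (MvPolynomial ι ℚ) →
        FractionRing (MvPolynomial ι ℚ) → Prop)),
      #J = 2 ^ Cardinal.continuum ∧
      (∀ j, IsFieldOrdering (R j) ∧ ¬ IsArchimedeanOrdering (R j)) ∧
      (∀ j j' : J, j ≠ j' →
        ¬ ∃ f : FractionRing (MvPolynomial ι ℚ) ≃+* FractionRing (MvPolynomial ι ℚ),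
          ∀ a b, R j a b ↔ R j' (f a) (f b)) := by
  obtain ⟨r, hr⟩ := exists_algebraicIndependent_real (κ := ι ⊕ ι)
    (by simp [hι, add_eq_self aleph0_le_continuum])
  obtain ⟨E⟩ : Nonempty (ι ≃ Option ι) :=
    Cardinal.eq.1 (by rw [mk_option, hι, add_one_eq aleph0_le_continuum])
  refine ⟨Set ι, tagOrder E hr, by rw [mk_set, hι], fun T => ⟨isFieldOrdering_comap _,
    not_isArchimedeanOrdering_comap _ (x := algebraMap _ _ (MvPolynomial.X (R := ℚ) (E.symm none)))
      fun n => ?_⟩, ?_⟩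
  · rw [tagEmbedding_X_none]
    exact_mod_cast Hyperreal.coe_lt_omega n
  · rintro T T' hne ⟨f, hf⟩
    exact hne (Set.ext fun a => by
      rw [← inl_mem_cutValues_tagOrder_iff E hr, cutValues_eq_of_ringEquiv f hf,
        inl_mem_cutValues_tagOrder_iff])
end
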